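/- Assume the setup below, and let U = Diag(u) be a diagonal matrix with entries 0 < u^j ≤ 1/L_Ω for all j, and put u_max = max_j u^j. Fix w_t ∈ ℝ^d and v ∈ ℝ^d, and define w_{t+1} = prox_R^{U^{-1}}(w_t − U v), the full-gradient step w̄_{t+1} = prox_R^{U^{-1}}(w_t − U ∇F(w_t)), and δ = ∇F(w_t) − v. Then for any minimizer w_* of P, ‖w_{t+1} − w_*‖_{U^{-1}}² ≤ ‖w_t − w_*‖_{U^{-1}}² − 2( P(w_{t+1}) − P(w_*) ) + 2 u_max ‖δ‖₂² + 2 ⟨w̄_{t+1} − w_*, δ⟩. -/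

import Mathlib

open scoped BigOperators RealInnerProductSpace

/-- `ℝ^d` as Euclidean space. -/
abbrev Euc (d : ℕ) := EuclideanSpace ℝ (Fin d)

/-- Action of a `d × d` real matrix on a vector of `ℝ^d`. -/
noncomputable def mdot {d : ℕ} (M : Matrix (Fin d) (Fin d) ℝ) (x : Euc d) : Euc d :=
  Matrix.toEuclideanLin M x

/-- The quadratic form `‖x‖_M² = xᵀ M x` associated with a matrix `M`. -/
noncomputable def qf {d : ℕ} (M : Matrix (Fin d) (Fin d) ℝ) (x : Euc d) : ℝ :=
  ⟪x, mdot M x⟫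

/-- `u` is a point of the scaled proximal operator `prox_R^M (w)`, i.e. a minimizer of
`y ↦ (1/2)‖y - w‖_M² + R y`, for an extended-real-valued `R`. -/
def IsProxE {d : ℕ} (R : Euc d → EReal) (M : Matrix (Fin d) (Fin d) ℝ) (w u : Euc d) : Prop :=
  ∀ y, ((2⁻¹ * qf M (u - w) : ℝ) : EReal) + R u ≤ ((2⁻¹ * qf M (y - w) : ℝ) : EReal) + R y

/-- Convexity of an extended-real-valued function on `ℝ^d`. -/
def ERealConvexOn {d : ℕ} (R : Euc d → EReal) : Prop :=
  ∀ x y : Euc d, ∀ a b : ℝ, 0 ≤ a → 0 ≤ b → a + b = 1 →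
    R (a • x + b • y) ≤ (a : EReal) * R x + (b : EReal) * R y

/-- Properness of an extended-real-valued function: never `-∞`, and finite somewhere. -/
def ERealProper {d : ℕ} (R : Euc d → EReal) : Prop :=
  (∀ x, R x ≠ ⊥) ∧ (∃ x, R x ≠ ⊤)

/-- The average `F = (1/n) ∑ᵢ fᵢ`. -/
noncomputable def Favg {d n : ℕ} (f : Fin n → Euc d → ℝ) (x : Euc d) : ℝ :=
  (n : ℝ)⁻¹ * ∑ i, f i x

/-- The averaged gradient `∇F = (1/n) ∑ᵢ ∇fᵢ`. -/
noncomputable def gAvg {d n : ℕ} (gf : Fin n → Euc d → Euc d) (x : Euc d) : Euc d :=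
  (n : ℝ)⁻¹ • ∑ i, gf i x

/-- The composite objective `P = F + R` with extended-real-valued `R`. -/
noncomputable def Pobj {d n : ℕ} (f : Fin n → Euc d → ℝ) (R : Euc d → EReal) (x : Euc d) :
    EReal := ((Favg f x : ℝ) : EReal) + R x

/-!
Everything is measured in the metric of `U⁻¹`. The three-point identity and the first-order
optimality of `w_{t+1}` bound `‖w_{t+1} - w_*‖²` by
`‖w_t - w_*‖² - ‖w_{t+1} - w_t‖² + 2 (R w_* - R w_{t+1}) + 2 ⟪v, w_* - w_{t+1}⟫`.
Convexity of `F` at `w_t` and the descent lemma (the mean smoothness constant is at most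
`L_Ω ≤ 1 / uʲ`) bound `F w_{t+1} - F w_*` by `⟪∇F w_t, w_{t+1} - w_*⟫ + ½ ‖w_{t+1} - w_t‖²`,
which absorbs the negative term. What is left is `2 ⟪δ, w_{t+1} - w_*⟫`; split at `w̄_{t+1}`,
the part `⟪δ, w_{t+1} - w̄_{t+1}⟫` is at most `‖δ‖²_U ≤ u_max ‖δ‖²` because the scaled prox is
firmly nonexpansive.
-/

open Set Matrix Filter Topology

section QuadraticForm

variable {d : ℕ} {M : Matrix (Fin d) (Fin d) ℝ}

lemma mdot_add (x y : Euc d) :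
    mdot M (x + y) = mdot M x + mdot M y :=
  map_add _ x y

lemma mdot_sub (x y : Euc d) :
    mdot M (x - y) = mdot M x - mdot M y :=
  map_sub _ x y

lemma inner_mdot_left (hM : M.IsHermitian) (x y : Euc d) : ⟪mdot M x, y⟫ = ⟪x, mdot M y⟫ :=
  isSymmetric_toEuclideanLin_iff.2 hM x y

lemma qf_add (hM : M.IsHermitian) (x y : Euc d) :
    qf M (x + y) = qf M x + 2 * ⟪mdot M x, y⟫ + qf M y := by
  have hxy := inner_mdot_left hM x y
  simp only [qf, mdot, map_add, inner_add_left, inner_add_right] at hxy ⊢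
  rw [← hxy, real_inner_comm (toEuclideanLin M x) y]
  ring

lemma qf_smul (t : ℝ) (x : Euc d) : qf M (t • x) = t ^ 2 * qf M x := by
  simp only [qf, mdot, map_smul, inner_smul_left, inner_smul_right, RCLike.conj_to_real]
  ring

lemma qf_sub_eq_qf_sub_add (hM : M.IsHermitian) (x y z : Euc d) :
    qf M (x - z) = qf M (y - z) + 2 * ⟪mdot M (x - y), x - z⟫ - qf M (x - y) := by
  have hsplit : x - z = (x - y) + (y - z) := by abel
  rw [hsplit, qf_add hM, inner_add_right, qf, real_inner_comm]
  ring

lemma mdot_diagonal_apply (c : Fin d → ℝ) (x : Euc d) (j : Fin d) :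
    mdot (diagonal c) x j = c j * x j := by
  simp [mdot, mulVec_diagonal]

lemma qf_diagonal (c : Fin d → ℝ) (x : Euc d) : qf (diagonal c) x = ∑ j, c j * x j ^ 2 := by
  simp only [qf, PiLp.inner_apply, mdot_diagonal_apply, RCLike.inner_apply, conj_trivial]
  exact Finset.sum_congr rfl fun j _ => by ring

lemma qf_diagonal_le {c : Fin d → ℝ} {a : ℝ} (h : ∀ j, c j ≤ a) (x : Euc d) :
    qf (diagonal c) x ≤ a * ‖x‖ ^ 2 := by
  rw [qf_diagonal, EuclideanSpace.real_norm_sq_eq, Finset.mul_sum]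
  gcongr with j
  exact h j

lemma le_qf_diagonal {c : Fin d → ℝ} {a : ℝ} (h : ∀ j, a ≤ c j) (x : Euc d) :
    a * ‖x‖ ^ 2 ≤ qf (diagonal c) x := by
  rw [qf_diagonal, EuclideanSpace.real_norm_sq_eq, Finset.mul_sum]
  gcongr with j
  exact h j

lemma inv_diagonal_eq {u : Fin d → ℝ} (hu : ∀ j, u j ≠ 0) : (diagonal u)⁻¹ = diagonal u⁻¹ := by
  refine inv_eq_right_inv ?_
  rw [diagonal_mul_diagonal, ← diagonal_one]
  exact congrArg diagonal (funext fun j => mul_inv_cancel₀ (hu j))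

lemma mdot_diagonal_inv_mdot_diagonal {u : Fin d → ℝ} (hu : ∀ j, u j ≠ 0) (x : Euc d) :
    mdot (diagonal u⁻¹) (mdot (diagonal u) x) = x := by
  ext j
  simp only [mdot_diagonal_apply, Pi.inv_apply, inv_mul_cancel_left₀ (hu j)]

lemma two_mul_inner_le_qf_diagonal_add {u : Fin d → ℝ} (hu : ∀ j, 0 < u j) (x y : Euc d) :
    2 * ⟪x, y⟫ ≤ qf (diagonal u) x + qf (diagonal u⁻¹) y := by
  simp only [qf_diagonal, PiLp.inner_apply, RCLike.inner_apply, conj_trivial, Finset.mul_sum,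
    ← Finset.sum_add_distrib, Pi.inv_apply]
  gcongr with j
  have hsq := mul_nonneg (inv_nonneg.2 (hu j).le) (sq_nonneg (u j * x j - y j))
  have hinv : u j * (u j)⁻¹ = 1 := mul_inv_cancel₀ (hu j).ne'
  linear_combination hsq + (u j * x j ^ 2 - 2 * x j * y j) * hinv

end QuadraticForm

section SmoothConvex

variable {E : Type*} [NormedAddCommGroup E] [InnerProductSpace ℝ E] [CompleteSpace E]
  {f : E → ℝ} {x y : E}

lemma HasGradientAt.hasDerivAt_comp_lineMap {g : E} {s : ℝ}
    (hf : HasGradientAt f g (AffineMap.lineMap x y s)) :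
    HasDerivAt (fun t : ℝ => f (AffineMap.lineMap x y t)) ⟪g, y - x⟫ s := by
  have := hf.hasFDerivAt.comp_hasDerivAt s AffineMap.hasDerivAt_lineMap
  simp only [Function.comp_def, InnerProductSpace.toDual_apply_apply] at this
  exact this

lemma ConvexOn.add_inner_le_of_hasGradientAt {g : E} (hf : ConvexOn ℝ univ f)
    (hg : HasGradientAt f g x) (y : E) : f x + ⟪g, y - x⟫ ≤ f y := by
  have hline : ConvexOn ℝ univ (fun t : ℝ => f (AffineMap.lineMap x y t)) :=
    hf.comp_affineMap (AffineMap.lineMap x y)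
  have hderiv := HasGradientAt.hasDerivAt_comp_lineMap (y := y) (s := 0) (by simpa using hg)
  have := hline.le_slope_of_hasDerivAt (mem_univ 0) (mem_univ 1) zero_lt_one hderiv
  simp only [slope_def_field, AffineMap.lineMap_apply_one, AffineMap.lineMap_apply_zero,
    sub_zero, div_one] at this
  linarith

lemma le_add_inner_add_of_lipschitz_gradient {g : E → E} {L : ℝ}
    (hg : ∀ z, HasGradientAt f (g z) z) (hL : ∀ a b, ‖g a - g b‖ ≤ L * ‖a - b‖) (x y : E) :
    f y ≤ f x + ⟪g x, y - x⟫ + L / 2 * ‖y - x‖ ^ 2 := by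
  set φ : ℝ → ℝ := fun t => f (AffineMap.lineMap x y t)
  have hφ : ∀ t, HasDerivAt φ ⟪g (AffineMap.lineMap x y t), y - x⟫ t := fun t =>
    (hg _).hasDerivAt_comp_lineMap
  set B : ℝ → ℝ := fun t => f x + t * ⟪g x, y - x⟫ + L / 2 * t ^ 2 * ‖y - x‖ ^ 2
  have hB : ∀ t, HasDerivAt B (⟪g x, y - x⟫ + L * t * ‖y - x‖ ^ 2) t := by
    intro t
    have := (((hasDerivAt_id t).mul_const ⟪g x, y - x⟫).const_add (f x)).add
      (((hasDerivAt_pow 2 t).const_mul (L / 2)).mul_const (‖y - x‖ ^ 2))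
    exact this.congr_deriv (by simp only [Nat.add_one_sub_one, pow_one, Nat.cast_ofNat]; ring)
  have bound : ∀ t ∈ Ico (0 : ℝ) 1,
      ⟪g (AffineMap.lineMap x y t), y - x⟫ ≤ ⟪g x, y - x⟫ + L * t * ‖y - x‖ ^ 2 := by
    intro t ht
    have hdist : ‖AffineMap.lineMap x y t - x‖ = t * ‖y - x‖ := by
      rw [AffineMap.lineMap_apply_module', add_sub_cancel_right, norm_smul,
        Real.norm_of_nonneg ht.1]
    calc ⟪g (AffineMap.lineMap x y t), y - x⟫
        = ⟪g x, y - x⟫ + ⟪g (AffineMap.lineMap x y t) - g x, y - x⟫ := by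
          rw [inner_sub_left]; ring
      _ ≤ ⟪g x, y - x⟫ + ‖g (AffineMap.lineMap x y t) - g x‖ * ‖y - x‖ := by
          gcongr; exact real_inner_le_norm _ _
      _ ≤ ⟪g x, y - x⟫ + L * (t * ‖y - x‖) * ‖y - x‖ := by
          gcongr; rw [← hdist]; exact hL _ _
      _ = ⟪g x, y - x⟫ + L * t * ‖y - x‖ ^ 2 := by ring
  have := image_le_of_deriv_right_le_deriv_boundary (a := 0) (b := 1)
    (fun t _ => (hφ t).continuousAt.continuousWithinAt) (fun t _ => (hφ t).hasDerivWithinAt)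
    (by simp [φ, B]) (fun t _ => (hB t).continuousAt.continuousWithinAt)
    (fun t _ => (hB t).hasDerivWithinAt) bound (right_mem_Icc.2 zero_le_one)
  simpa [φ, B] using this

end SmoothConvex

lemma nonneg_of_forall_add_mul_nonneg {a b : ℝ} (h : ∀ t ∈ Ioc (0 : ℝ) 1, 0 ≤ a + t * b) :
    0 ≤ a := by
  have hlim : Tendsto (fun t : ℝ => a + t * b) (𝓝[>] 0) (𝓝 a) := by
    have : Continuous fun t : ℝ => a + t * b := by fun_prop
    simpa using (this.tendsto 0).mono_left nhdsWithin_le_nhds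
  refine ge_of_tendsto hlim ?_
  filter_upwards [Ioc_mem_nhdsGT zero_lt_one] with t ht using h t ht

lemma ne_top_of_coe_add_le_coe_add {a b : ℝ} {s t : EReal} (h : a + s ≤ b + t) (ht : t ≠ ⊤) :
    s ≠ ⊤ := by
  rintro rfl
  rw [EReal.coe_add_top, top_le_iff] at h
  exact (EReal.add_lt_top (EReal.coe_ne_top b) ht).ne h

section Prox

variable {d : ℕ} {R : Euc d → EReal} {M : Matrix (Fin d) (Fin d) ℝ}

lemma IsProxE.ne_top {w p y : Euc d} (hp : IsProxE R M w p) (hy : R y ≠ ⊤) : R p ≠ ⊤ :=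
  ne_top_of_coe_add_le_coe_add (hp y) hy

lemma ERealConvexOn.le_add_mul_sub (hR : ERealConvexOn R) {p y : Euc d} {rp ry t : ℝ}
    (hp : R p = rp) (hy : R y = ry) (ht₀ : 0 ≤ t) (ht₁ : t ≤ 1) :
    R (p + t • (y - p)) ≤ ((rp + t * (ry - rp) : ℝ) : EReal) := by
  have hcomb : p + t • (y - p) = (1 - t) • p + t • y := by module
  have hval : ((1 - t : ℝ) : EReal) * rp + (t : EReal) * ry
      = ((rp + t * (ry - rp) : ℝ) : EReal) := by
    norm_cast
    ring
  rw [hcomb, ← hval, ← hp, ← hy]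
  exact hR p y (1 - t) t (by linarith) ht₀ (by ring)

lemma IsProxE.inner_le (hM : M.IsHermitian) (hR : ERealConvexOn R) {w p y : Euc d} {rp ry : ℝ}
    (hprox : IsProxE R M w p) (hp : R p = rp) (hy : R y = ry) :
    ⟪mdot M (p - w), p - y⟫ ≤ ry - rp := by
  -- test the prox inequality against `p + t • (y - p)` and let `t → 0`
  rw [← sub_nonneg]
  refine nonneg_of_forall_add_mul_nonneg (b := qf M (y - p) / 2) fun t ht => ?_
  have hle := (hprox (p + t • (y - p))).trans
    (add_le_add_right (hR.le_add_mul_sub hp hy ht.1.le ht.2) _)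
  rw [hp] at hle
  have hreal : 2⁻¹ * qf M (p - w) + rp
      ≤ 2⁻¹ * qf M (p + t • (y - p) - w) + (rp + t * (ry - rp)) := by
    exact_mod_cast hle
  have hexpand : p + t • (y - p) - w = (p - w) + t • (y - p) := by abel
  have hflip : ⟪mdot M (p - w), y - p⟫ = -⟪mdot M (p - w), p - y⟫ := by
    rw [← inner_neg_right, neg_sub]
  rw [hexpand, qf_add hM, qf_smul, inner_smul_right, hflip] at hreal
  refine nonneg_of_mul_nonneg_right (a := t) ?_ ht.1
  linarith

lemma IsProxE.qf_sub_le_inner (hM : M.IsHermitian) (hR : ERealConvexOn R) {w₁ w₂ p₁ p₂ : Euc d}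
    {r₁ r₂ : ℝ} (hprox₁ : IsProxE R M w₁ p₁) (hprox₂ : IsProxE R M w₂ p₂) (hp₁ : R p₁ = r₁)
    (hp₂ : R p₂ = r₂) :
    qf M (p₁ - p₂) ≤ ⟪mdot M (w₁ - w₂), p₁ - p₂⟫ := by
  have h₁ := hprox₁.inner_le hM hR hp₁ hp₂
  have h₂ := hprox₂.inner_le hM hR hp₂ hp₁
  have hflip : p₂ - p₁ = -(p₁ - p₂) := (neg_sub p₁ p₂).symm
  rw [hflip, inner_neg_right] at h₂
  rw [qf, real_inner_comm]
  simp only [mdot_sub, inner_sub_left] at h₁ h₂ ⊢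
  linarith

lemma IsProxE.qf_sub_le (hM : M.IsHermitian) (hR : ERealConvexOn R) {w p y : Euc d} {rp ry : ℝ}
    (hprox : IsProxE R M w p) (hp : R p = rp) (hy : R y = ry) (x : Euc d) :
    qf M (p - y) ≤ qf M (x - y) - qf M (p - x) + 2 * (ry - rp) - 2 * ⟪mdot M (x - w), p - y⟫ := by
  have hvi := hprox.inner_le hM hR hp hy
  have hsplit : p - w = (p - x) + (x - w) := by abel
  rw [hsplit, mdot_add, inner_add_left] at hvi
  rw [qf_sub_eq_qf_sub_add hM p x y]
  linarith

lemma IsProxE.inner_sub_le_qf_diagonal {u : Fin d → ℝ} (hu : ∀ j, 0 < u j) (hR : ERealConvexOn R)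
    {x a b p₁ p₂ : Euc d} {r₁ r₂ : ℝ}
    (hprox₁ : IsProxE R (diagonal u⁻¹) (x - mdot (diagonal u) a) p₁)
    (hprox₂ : IsProxE R (diagonal u⁻¹) (x - mdot (diagonal u) b) p₂)
    (hp₁ : R p₁ = r₁) (hp₂ : R p₂ = r₂) :
    ⟪b - a, p₁ - p₂⟫ ≤ qf (diagonal u) (b - a) := by
  have hfirm := hprox₁.qf_sub_le_inner (isHermitian_diagonal _) hR hprox₂ hp₁ hp₂
  have hu₀ : ∀ j, u j ≠ 0 := fun j => (hu j).ne'
  rw [sub_sub_sub_cancel_left, ← mdot_sub, mdot_diagonal_inv_mdot_diagonal hu₀] at hfirm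
  linarith [two_mul_inner_le_qf_diagonal_add hu (b - a) (p₁ - p₂)]

lemma ERealProper.exists_eq_coe (hR : ERealProper R) {x : Euc d} (hx : R x ≠ ⊤) :
    ∃ r : ℝ, R x = r :=
  ⟨(R x).toReal, (EReal.coe_toReal hx (hR.1 x)).symm⟩

end Prox

section FiniteSum

variable {d n : ℕ} {f : Fin n → Euc d → ℝ} {gf : Fin n → Euc d → Euc d}

lemma inner_gAvg (gf : Fin n → Euc d → Euc d) (x z : Euc d) :
    ⟪gAvg gf x, z⟫ = (n : ℝ)⁻¹ * ∑ i, ⟪gf i x, z⟫ := by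
  rw [gAvg, real_inner_smul_left, sum_inner]

lemma Favg_add_inner_le (hgrad : ∀ i x, HasGradientAt (f i) (gf i x) x)
    (hconv : ∀ i, ConvexOn ℝ univ (f i)) (x y : Euc d) :
    Favg f x + ⟪gAvg gf x, y - x⟫ ≤ Favg f y := by
  rw [Favg, Favg, inner_gAvg, ← mul_add, ← Finset.sum_add_distrib]
  gcongr with i
  exact (hconv i).add_inner_le_of_hasGradientAt (hgrad i x) y

lemma Favg_le_add_inner_add (hgrad : ∀ i x, HasGradientAt (f i) (gf i x) x) {L : Fin n → ℝ}
    (hLip : ∀ i x y, ‖gf i x - gf i y‖ ≤ L i * ‖x - y‖) (x y : Euc d) :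
    Favg f y ≤ Favg f x + ⟪gAvg gf x, y - x⟫ + (n : ℝ)⁻¹ * (∑ i, L i) / 2 * ‖y - x‖ ^ 2 := by
  calc Favg f y ≤ (n : ℝ)⁻¹ * ∑ i, (f i x + ⟪gf i x, y - x⟫ + L i / 2 * ‖y - x‖ ^ 2) := by
        rw [Favg]
        gcongr with i
        exact le_add_inner_add_of_lipschitz_gradient (hgrad i) (hLip i) x y
    _ = _ := by
        simp only [Finset.sum_add_distrib, ← Finset.sum_mul, ← Finset.sum_div, Favg, inner_gAvg]
        ring

lemma Favg_sub_le_inner_add (hgrad : ∀ i x, HasGradientAt (f i) (gf i x) x)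
    (hconv : ∀ i, ConvexOn ℝ univ (f i)) {L : Fin n → ℝ}
    (hLip : ∀ i x y, ‖gf i x - gf i y‖ ≤ L i * ‖x - y‖) (x y z : Euc d) :
    Favg f y - Favg f z ≤ ⟪gAvg gf x, y - z⟫ + (n : ℝ)⁻¹ * (∑ i, L i) / 2 * ‖y - x‖ ^ 2 := by
  have hlower := Favg_add_inner_le hgrad hconv x z
  have hupper := Favg_le_add_inner_add hgrad hLip x y
  have hinner : ⟪gAvg gf x, y - x⟫ - ⟪gAvg gf x, z - x⟫ = ⟪gAvg gf x, y - z⟫ := by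
    rw [← inner_sub_right, sub_sub_sub_cancel_right]
  linarith

lemma inv_mul_sum_le_of_forall_div_le {L q : Fin n → ℝ} {Λ : ℝ} (hq : ∀ i, 0 < q i)
    (hqs : ∑ i, q i = 1) (h : ∀ i, L i / ((n : ℝ) * q i) ≤ Λ) :
    (n : ℝ)⁻¹ * ∑ i, L i ≤ Λ := by
  calc (n : ℝ)⁻¹ * ∑ i, L i = ∑ i, q i * (L i / ((n : ℝ) * q i)) := by
        rw [Finset.mul_sum]
        refine Finset.sum_congr rfl fun i _ => ?_
        have : (n : ℝ) ≠ 0 := Nat.cast_ne_zero.2 (Fin.pos i).ne'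
        field_simp [(hq i).ne']
    _ ≤ ∑ i, q i * Λ := by gcongr with i; exacts [(hq i).le, h i]
    _ = Λ := by rw [← Finset.sum_mul, hqs, one_mul]

lemma Pobj_eq_coe (f : Fin n → Euc d → ℝ) {R : Euc d → EReal} {x : Euc d} {r : ℝ}
    (hx : R x = r) : Pobj f R x = ((Favg f x + r : ℝ) : EReal) := by
  rw [Pobj, hx, EReal.coe_add]

lemma ne_top_of_forall_Pobj_le {R : Euc d → EReal} {x₀ w : Euc d} (hx₀ : R x₀ ≠ ⊤)
    (hw : ∀ y, Pobj f R w ≤ Pobj f R y) : R w ≠ ⊤ :=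
  ne_top_of_coe_add_le_coe_add (hw x₀) hx₀

end FiniteSum

theorem distance_decrease_bound_general {d n : ℕ}
    (f : Fin n → Euc d → ℝ) (gf : Fin n → Euc d → Euc d)
    (hgrad : ∀ i x, HasGradientAt (f i) (gf i x) x)
    (hconvf : ∀ i, ConvexOn ℝ Set.univ (f i))
    (L : Fin n → ℝ) (hLip : ∀ i x y, ‖gf i x - gf i y‖ ≤ L i * ‖x - y‖)
    (q : Fin n → ℝ) (hq : ∀ i, 0 < q i) (hqs : ∑ i, q i = 1)
    (LΩ : ℝ) (hLΩ : IsGreatest (Set.range fun i => L i / ((n : ℝ) * q i)) LΩ)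
    (R : Euc d → EReal) (hproper : ERealProper R)
    (hconvR : ERealConvexOn R)
    (u : Fin d → ℝ) (hu : ∀ j, 0 < u j ∧ u j ≤ 1 / LΩ)
    (umax : ℝ) (humax : IsGreatest (Set.range u) umax)
    (wt v wnext wbar : Euc d)
    (hnext : IsProxE R (Matrix.diagonal u)⁻¹ (wt - mdot (Matrix.diagonal u) v) wnext)
    (hbar : IsProxE R (Matrix.diagonal u)⁻¹
      (wt - mdot (Matrix.diagonal u) (gAvg gf wt)) wbar)
    (wstar : Euc d) (hstar : ∀ y, Pobj f R wstar ≤ Pobj f R y) :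
    ((qf (Matrix.diagonal u)⁻¹ (wnext - wstar) : ℝ) : EReal)
      ≤ ((qf (Matrix.diagonal u)⁻¹ (wt - wstar)
            + 2 * umax * ‖gAvg gf wt - v‖ ^ 2
            + 2 * ⟪wbar - wstar, gAvg gf wt - v⟫ : ℝ) : EReal)
        - 2 * (Pobj f R wnext - Pobj f R wstar) := by
  have hu₀ : ∀ j, u j ≠ 0 := fun j => (hu j).1.ne'
  rw [inv_diagonal_eq hu₀] at hnext hbar ⊢
  obtain ⟨x₀, hx₀⟩ := hproper.2
  have hstar_top := ne_top_of_forall_Pobj_le hx₀ hstar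
  obtain ⟨rs, hrs⟩ := hproper.exists_eq_coe hstar_top
  obtain ⟨rn, hrn⟩ := hproper.exists_eq_coe (hnext.ne_top hstar_top)
  obtain ⟨rb, hrb⟩ := hproper.exists_eq_coe (hbar.ne_top hstar_top)
  have hprox := hnext.qf_sub_le (isHermitian_diagonal _) hconvR hrn hrs wt
  rw [sub_sub_cancel, mdot_diagonal_inv_mdot_diagonal hu₀] at hprox
  have hLavg : ∀ j, (n : ℝ)⁻¹ * ∑ i, L i ≤ u⁻¹ j := fun j => by
    have hLΩ_pos : 0 < LΩ := one_div_pos.1 ((hu j).1.trans_le (hu j).2)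
    calc (n : ℝ)⁻¹ * ∑ i, L i ≤ LΩ := inv_mul_sum_le_of_forall_div_le hq hqs fun i => hLΩ.2 ⟨i, rfl⟩
      _ ≤ u⁻¹ j := by rw [Pi.inv_apply, ← one_div]; exact (le_one_div (hu j).1 hLΩ_pos).1 (hu j).2
  have hF := Favg_sub_le_inner_add hgrad hconvf hLip wt wnext wstar
  have hsmooth := le_qf_diagonal hLavg (wnext - wt)
  have hnoise := hnext.inner_sub_le_qf_diagonal (fun j => (hu j).1) hconvR hbar hrn hrb
  have humax_bound := qf_diagonal_le (fun j => humax.2 ⟨j, rfl⟩) (gAvg gf wt - v)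
  have hsplit : ⟪gAvg gf wt, wnext - wstar⟫ - ⟪v, wnext - wstar⟫
      = ⟪gAvg gf wt - v, wnext - wbar⟫ + ⟪wbar - wstar, gAvg gf wt - v⟫ := by
    rw [← inner_sub_left, real_inner_comm _ (wbar - wstar), ← inner_add_right, sub_add_sub_cancel]
  rw [Pobj_eq_coe f hrn, Pobj_eq_coe f hrs, ← EReal.coe_sub, show (2 : EReal) = (2 : ℝ) from rfl,
    ← EReal.coe_mul, ← EReal.coe_sub, EReal.coe_le_coe_iff]
  linarith

/-- with the finite-sum setup and `U = Diag(u)`, `0 < uʲ ≤ 1/L_Ω`,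
`w_{t+1} = prox_R^{U⁻¹}(w_t − Uv)`, `w̄_{t+1} = prox_R^{U⁻¹}(w_t − U∇F(w_t))`,
`δ = ∇F(w_t) − v`, for any minimizer `w_*` of `P`:
`‖w_{t+1} − w_*‖_{U⁻¹}² ≤ ‖w_t − w_*‖_{U⁻¹}² − 2(P(w_{t+1}) − P(w_*)) + 2u_max‖δ‖₂²
 + 2⟨w̄_{t+1} − w_*, δ⟩`. -/
theorem distance_decrease_bound {d n : ℕ} (hn : 0 < n)
    (f : Fin n → Euc d → ℝ) (gf : Fin n → Euc d → Euc d)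
    (hgrad : ∀ i x, HasGradientAt (f i) (gf i x) x)
    (hconvf : ∀ i, ConvexOn ℝ Set.univ (f i))
    (L : Fin n → ℝ) (hLip : ∀ i x y, ‖gf i x - gf i y‖ ≤ L i * ‖x - y‖)
    (q : Fin n → ℝ) (hq : ∀ i, 0 < q i) (hqs : ∑ i, q i = 1)
    (LΩ : ℝ) (hLΩ : IsGreatest (Set.range fun i => L i / ((n : ℝ) * q i)) LΩ)
    (R : Euc d → EReal) (hproper : ERealProper R) (hlsc : LowerSemicontinuous R)
    (hconvR : ERealConvexOn R)
    (u : Fin d → ℝ) (hu : ∀ j, 0 < u j ∧ u j ≤ 1 / LΩ)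
    (umax : ℝ) (humax : IsGreatest (Set.range u) umax)
    (wt v wnext wbar : Euc d)
    (hnext : IsProxE R (Matrix.diagonal u)⁻¹ (wt - mdot (Matrix.diagonal u) v) wnext)
    (hbar : IsProxE R (Matrix.diagonal u)⁻¹
      (wt - mdot (Matrix.diagonal u) (gAvg gf wt)) wbar)
    (wstar : Euc d) (hstar : ∀ y, Pobj f R wstar ≤ Pobj f R y) :
    ((qf (Matrix.diagonal u)⁻¹ (wnext - wstar) : ℝ) : EReal)
      ≤ ((qf (Matrix.diagonal u)⁻¹ (wt - wstar)
            + 2 * umax * ‖gAvg gf wt - v‖ ^ 2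
            + 2 * ⟪wbar - wstar, gAvg gf wt - v⟫ : ℝ) : EReal)
        - 2 * (Pobj f R wnext - Pobj f R wstar) :=
  distance_decrease_bound_general f gf hgrad hconvf L hLip q hq hqs LΩ hLΩ R hproper hconvR u hu
    umax humax wt v wnext wbar hnext hbar wstar hstar
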